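/- Fix an integer n ≥ 1 and let C(n) = S_n ⊗ T_n. Then γ_{C(n)}(1) = 0, the sets Z⁻ and Z⁺ at t = 1 each consist of a single cycle, namely z⁻ = (a₁ + ⋯ + a_{2n+1}) ⊗ A₁ and z⁺ = (a₁ + ⋯ + a_{2n+1}) ⊗ A_{n+1}, every chain w with ∂w = z⁻ + z⁺ contains (with nonzero coefficient) the basis elements a₁ ⊗ B₁ (at bifiltration level (−2n+2, 2n)) and a_{2n+1} ⊗ B_n (at level (2n, −2n+2)), and Υ²_{C(n),1}(s) = (4n−2)s − 4n for s ∈ [0,1] and Υ²_{C(n),1}(s) = (−4n+2)s + 4n − 4 for s ∈ [1,2]. -/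

import Mathlib

open scoped BigOperators

/-- A "pre-complex": a finite distinguished basis `B`, a grading `gr`,
bifiltration functions `alg` and `alex`, and a differential recorded by its
matrix `d` over the field `F₂ = ZMod 2`:  `∂ x = ∑ y, d x y • y`. -/
structure PreComplex where
  B : Type
  fB : Fintype B
  dB : DecidableEq B
  gr : B → ℤ
  alg : B → ℤ
  alex : B → ℤ
  d : B → B → ZMod 2

attribute [instance] PreComplex.fB PreComplex.dB

namespace PreComplex

variable (C : PreComplex)

/-- Chains: F₂-linear combinations of basis elements. -/
abbrev Chain : Type := C.B → ZMod 2

/-- The boundary of a chain, extending `∂ x = ∑ y, d x y • y` linearly. -/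
def bdry (c : C.Chain) : C.Chain := fun y => ∑ x, c x * C.d x y

/-- A chain is homogeneous of grading `k`. -/
def isGraded (c : C.Chain) (k : ℤ) : Prop := ∀ x, c x ≠ 0 → C.gr x = k

def isCycle (c : C.Chain) : Prop := C.bdry c = 0

def isBoundary (c : C.Chain) : Prop := ∃ w : C.Chain, C.bdry w = c

/-- A cycle of grading 0 representing the nonzero class of `H₀(C)`. -/
def GenCycle (z : C.Chain) : Prop :=
  C.isCycle z ∧ C.isGraded z 0 ∧ ¬ C.isBoundary z

/-- The bifiltration level of a basis element. -/
def lev (x : C.B) : ℤ × ℤ := (C.alg x, C.alex x)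

/-- A model knot complex: `∂ ∘ ∂ = 0`; `∂` drops the grading by one and does
not increase either filtration; the homology is one dimensional, concentrated
in grading 0; and the minimum over cycles representing the generator of
`H₀(C)` of their maximal `alg` (resp. `alex`) filtration level is 0. -/
def IsModel : Prop :=
  (∀ x z, (∑ y, C.d x y * C.d y z) = 0) ∧
  (∀ x y, C.d x y ≠ 0 → C.gr y = C.gr x - 1 ∧ C.alg y ≤ C.alg x ∧ C.alex y ≤ C.alex x) ∧
  (∀ k : ℤ, k ≠ 0 → ∀ z : C.Chain, C.isCycle z → C.isGraded z k → C.isBoundary z) ∧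
  (∃ z : C.Chain, C.GenCycle z) ∧
  (∀ z z' : C.Chain, C.GenCycle z → C.GenCycle z' → C.isBoundary (z + z')) ∧
  (∃ z : C.Chain, C.GenCycle z ∧ ∀ x, z x ≠ 0 → C.alg x ≤ 0) ∧
  (∀ z : C.Chain, C.GenCycle z → ∃ x, z x ≠ 0 ∧ 0 ≤ C.alg x) ∧
  (∃ z : C.Chain, C.GenCycle z ∧ ∀ x, z x ≠ 0 → C.alex x ≤ 0) ∧
  (∀ z : C.Chain, C.GenCycle z → ∃ x, z x ≠ 0 ∧ 0 ≤ C.alex x)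

/-- An acyclic complex: conditions (i) and (ii) hold but the homology vanishes. -/
def IsAcyclic : Prop :=
  (∀ x z, (∑ y, C.d x y * C.d y z) = 0) ∧
  (∀ x y, C.d x y ≠ 0 → C.gr y = C.gr x - 1 ∧ C.alg y ≤ C.alg x ∧ C.alex y ≤ C.alex x) ∧
  (∀ z : C.Chain, C.isCycle z → C.isBoundary z)

end PreComplex

/-- `f_t(i,j) = (t/2)·j + (1 − t/2)·i`. -/
noncomputable def fval (t : ℝ) (p : ℤ × ℤ) : ℝ :=
  (t / 2) * (p.2 : ℝ) + (1 - t / 2) * (p.1 : ℝ)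

namespace PreComplex

variable (C : PreComplex)

/-- A chain lies in the subcomplex `F_{t,s}`. -/
def inF (t s : ℝ) (c : C.Chain) : Prop :=
  ∀ x, c x ≠ 0 → fval t (C.lev x) ≤ s

/-- `γ_C(t)`: the minimal `s` such that `H₀(F_{t,s}) → H₀(C)` is surjective,
i.e. such that `F_{t,s}` contains a cycle representing the generator. -/
noncomputable def gamma (t : ℝ) : ℝ :=
  sInf {s : ℝ | ∃ z : C.Chain, C.GenCycle z ∧ C.inF t s z}

/-- The Upsilon invariant `Υ_C(t) = −2 γ_C(t)`. -/
noncomputable def Upsilon (t : ℝ) : ℝ := -2 * C.gamma t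

/-- `P`: the set of bifiltration levels of basis elements. -/
def PSet : Set (ℤ × ℤ) := Set.range C.lev

/-- `P_u = { p ∈ P : f_u(p) = γ_C(u) }`. -/
def Pt (u : ℝ) : Set (ℤ × ℤ) := {p ∈ C.PSet | fval u p = C.gamma u}

/-- `p` is the negative pivot point of `C` at `t`. -/
def IsNegPivot (t : ℝ) (p : ℤ × ℤ) : Prop :=
  ∃ δ₀ > (0 : ℝ), ∀ δ : ℝ, 0 < δ → δ < δ₀ → C.Pt (t - δ) ∩ C.Pt t = {p}

/-- `p` is the positive pivot point of `C` at `t`. -/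
def IsPosPivot (t : ℝ) (p : ℤ × ℤ) : Prop :=
  ∃ δ₀ > (0 : ℝ), ∀ δ : ℝ, 0 < δ → δ < δ₀ → C.Pt (t + δ) ∩ C.Pt t = {p}

/-- Cycles in `F_{t−δ, γ_C(t−δ)}` representing the nonzero class of `H₀(C)`. -/
def ZminusAt (t δ : ℝ) : Set C.Chain :=
  {z | C.GenCycle z ∧ C.inF (t - δ) (C.gamma (t - δ)) z}

/-- Cycles in `F_{t+δ, γ_C(t+δ)}` representing the nonzero class of `H₀(C)`. -/
def ZplusAt (t δ : ℝ) : Set C.Chain :=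
  {z | C.GenCycle z ∧ C.inF (t + δ) (C.gamma (t + δ)) z}

/-- `Z⁻`: the (eventual, for all sufficiently small `δ > 0`) set of cycles in
`F_{t−δ, γ_C(t−δ)}` representing the nonzero class of `H₀(C)`. -/
def Zminus (t : ℝ) : Set C.Chain :=
  {z | ∃ δ₀ > (0 : ℝ), ∀ δ : ℝ, 0 < δ → δ < δ₀ → z ∈ C.ZminusAt t δ}

/-- `Z⁺`: the (eventual, for all sufficiently small `δ > 0`) set of cycles in
`F_{t+δ, γ_C(t+δ)}` representing the nonzero class of `H₀(C)`. -/
def Zplus (t : ℝ) : Set C.Chain :=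
  {z | ∃ δ₀ > (0 : ℝ), ∀ δ : ℝ, 0 < δ → δ < δ₀ → z ∈ C.ZplusAt t δ}

/-- A basis element lies in the subcomplex `F_{t,γ_C(t)} + F_{s,r}`. -/
def inRegion (t s r : ℝ) (x : C.B) : Prop :=
  fval t (C.lev x) ≤ C.gamma t ∨ fval s (C.lev x) ≤ r

/-- `z` and `z'` represent the same homology class in `H₀(F_{t,γ_C(t)} + F_{s,r})`
(over F₂ the difference `z − z'` is `z + z'`). -/
def sameClass (t s r : ℝ) (z z' : C.Chain) : Prop :=
  (∀ x, z x ≠ 0 → C.inRegion t s r x) ∧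
  (∀ x, z' x ≠ 0 → C.inRegion t s r x) ∧
  ∃ w : C.Chain, (∀ x, w x ≠ 0 → C.inRegion t s r x) ∧ C.bdry w = z + z'

/-- The set of `r` for which some `z⁻ ∈ Z⁻` and `z⁺ ∈ Z⁺` represent the same
class in `H₀(F_{t,γ_C(t)} + F_{s,r})`. -/
def gamma2Set (t s : ℝ) : Set ℝ :=
  {r | ∃ zm ∈ C.Zminus t, ∃ zp ∈ C.Zplus t, C.sameClass t s r zm zp}

/-- `γ²_{C,t}(s)`, as an extended real: the minimum of `gamma2Set`
(`−∞` if the condition holds for every `r`). -/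
noncomputable def gamma2 (t s : ℝ) : EReal :=
  sInf ((fun r : ℝ => (r : EReal)) '' C.gamma2Set t s)

/-- `Υ²_{C,t}(s) = −2 (γ²_{C,t}(s) − γ_C(t))`. -/
noncomputable def Upsilon2 (t s : ℝ) : EReal :=
  (-2 : EReal) * (C.gamma2 t s - (C.gamma t : EReal))

end PreComplex

/-- The jump of the derivative of `f` at `t`: the right-hand derivative minus
the left-hand derivative. -/
noncomputable def derivJump (f : ℝ → ℝ) (t : ℝ) : ℝ :=
  derivWithin f (Set.Ici t) t - derivWithin f (Set.Iic t) t

/-- Direct sum of two pre-complexes. -/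
def PreComplex.dsum (C A : PreComplex) : PreComplex where
  B := C.B ⊕ A.B
  fB := inferInstance
  dB := inferInstance
  gr := Sum.elim C.gr A.gr
  alg := Sum.elim C.alg A.alg
  alex := Sum.elim C.alex A.alex
  d := fun x y =>
    match x, y with
    | Sum.inl x, Sum.inl y => C.d x y
    | Sum.inr x, Sum.inr y => A.d x y
    | _, _ => 0

/-- Tensor product of two pre-complexes. -/
def PreComplex.tensor (C₁ C₂ : PreComplex) : PreComplex where
  B := C₁.B × C₂.B
  fB := inferInstance
  dB := inferInstance
  gr := fun x => C₁.gr x.1 + C₂.gr x.2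
  alg := fun x => C₁.alg x.1 + C₂.alg x.2
  alex := fun x => C₁.alex x.1 + C₂.alex x.2
  d := fun x y =>
    (if x.2 = y.2 then C₁.d x.1 y.1 else 0) + (if x.1 = y.1 then C₂.d x.2 y.2 else 0)

/-- An isomorphism of pre-complexes: a bijection of the distinguished bases
preserving `gr`, `alg`, `alex`, whose linear extension commutes with the
differentials. -/
def PreComplex.Iso (C₁ C₂ : PreComplex) : Prop :=
  ∃ e : C₁.B ≃ C₂.B,
    (∀ x, C₂.gr (e x) = C₁.gr x) ∧
    (∀ x, C₂.alg (e x) = C₁.alg x) ∧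
    (∀ x, C₂.alex (e x) = C₁.alex x) ∧
    (∀ x y, C₂.d (e x) (e y) = C₁.d x y)

/-- Stable equivalence of pre-complexes: isomorphism after adding acyclic
summands. -/
def PreComplex.StablyEquiv (C₁ C₂ : PreComplex) : Prop :=
  ∃ A₁ A₂ : PreComplex, A₁.IsAcyclic ∧ A₂.IsAcyclic ∧ (C₁.dsum A₁).Iso (C₂.dsum A₂)

/-- The staircase complex `S_n` (a model, mod acyclics, for `CFK∞` of `n`
copies of `T(4,5) # −T(2,3;2,5)`): grading-0 generators `A₁,…,A_{n+1}`
(0-indexed: `A_j` at level `(2j, 2n−2j)`) and grading-1 generators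
`B₁,…,B_n` (0-indexed: `B_j` at level `(2j+2, 2n−2j)`), with
`∂B_j = A_j + A_{j+1}`. -/
def Sc (n : ℕ) : PreComplex where
  B := Fin (n + 1) ⊕ Fin n
  fB := inferInstance
  dB := inferInstance
  gr := Sum.elim (fun _ => 0) (fun _ => 1)
  alg := Sum.elim (fun j => 2 * (j : ℤ)) (fun j => 2 * (j : ℤ) + 2)
  alex := Sum.elim (fun j => 2 * (n : ℤ) - 2 * (j : ℤ)) (fun j => 2 * (n : ℤ) - 2 * (j : ℤ))
  d := fun x y =>
    match x, y with
    | Sum.inr j, Sum.inl i => if i.val = j.val ∨ i.val = j.val + 1 then 1 else 0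
    | _, _ => 0

/-- The complex `T_n` (a model, mod acyclics, for `CFK∞(−nT(2,5))`):
grading-0 generators `a₁,…,a_{2n+1}` (0-indexed: `a_i` at level
`(i − 2n, −i)`) and grading-(−1) generators `b₁,…,b_{2n}` (0-indexed: `b_i`
at level `(i − 2n, −i − 1)`), with `∂a_i = b_{i−1} + b_i` (omitting
out-of-range terms). -/
def Tc (n : ℕ) : PreComplex where
  B := Fin (2 * n + 1) ⊕ Fin (2 * n)
  fB := inferInstance
  dB := inferInstance
  gr := Sum.elim (fun _ => 0) (fun _ => -1)
  alg := Sum.elim (fun i => (i : ℤ) - 2 * (n : ℤ)) (fun i => (i : ℤ) - 2 * (n : ℤ))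
  alex := Sum.elim (fun i => -(i : ℤ)) (fun i => -(i : ℤ) - 1)
  d := fun x y =>
    match x, y with
    | Sum.inl i, Sum.inr j => if j.val + 1 = i.val ∨ j.val = i.val then 1 else 0
    | _, _ => 0

/-- `C(n) = S_n ⊗ T_n`. -/
def Cprod (n : ℕ) : PreComplex := (Sc n).tensor (Tc n)

/-- The cycle `z⁻ = (a₁ + ⋯ + a_{2n+1}) ⊗ A₁`. -/
def zminusC (n : ℕ) : (Cprod n).Chain :=
  fun p => @ite _ (p.1 = Sum.inl (⟨0, Nat.succ_pos n⟩ : Fin (n + 1)) ∧ p.2.isLeft = true)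
    (@instDecidableAnd _ _ ((Sc n).dB _ _) _) 1 0

/-- The cycle `z⁺ = (a₁ + ⋯ + a_{2n+1}) ⊗ A_{n+1}`. -/
def zplusC (n : ℕ) : (Cprod n).Chain :=
  fun p => @ite _ (p.1 = Sum.inl (Fin.last n) ∧ p.2.isLeft = true)
    (@instDecidableAnd _ _ ((Sc n).dB _ _) _) 1 0

/-!
Near `t = 1` the generators `B_j ⊗ b_m` of `C(n)` lie strictly above `f_t`-level `0`, so a cycle
representing the generator of `H₀` inside `F_{t,0}` is supported on the `A_k ⊗ a_i`; the cycle
condition makes it a sum of rows `A_k ⊗ (a₁ + ⋯ + a_{2n+1})`, and the filtration leaves only the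
row `k = 1` for `t < 1` and `k = n + 1` for `t > 1`. (Such rows are not boundaries: the cocycle
`(A₁ + ⋯ + A_{n+1})* ⊗ a₁*` detects them.) Hence `γ = 0` near `1` and `Z^∓ = {z^∓}`.

Since `S_n` has no cycles in grading `1`, every `w` with `∂w = z⁻ + z⁺` agrees with
`(B₁ + ⋯ + B_n) ⊗ (a₁ + ⋯ + a_{2n+1})` on the generators `B_j ⊗ a_i`, all of which sit at
`f_1`-level `1 > γ(1) = 0`. So `γ²(s)` is the largest `f_s`-level of a `B_j ⊗ a_i`, attained at
`B_n ⊗ a_{2n+1}` for `s ≤ 1` and at `B_1 ⊗ a_1` for `s ≥ 1`.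
-/

open Finset

lemma Fin.sum_ite_val_eq {M : Type*} [AddCommMonoid M] {n : ℕ} (g : Fin n → M) (v : ℕ) :
    ∑ j : Fin n, (if (j : ℕ) = v then g j else 0) = if h : v < n then g ⟨v, h⟩ else 0 := by
  split_ifs with h
  · rw [Fintype.sum_eq_single ⟨v, h⟩ fun j hj => if_neg fun hv => hj (Fin.ext hv), if_pos rfl]
  · exact sum_eq_zero fun j _ => if_neg (by omega)

lemma setOf_eventually_mem_eq_singleton {α : Type*} {S : ℝ → Set α} {ε : ℝ} (hε : 0 < ε)
    {z₀ : α} (h : ∀ δ, 0 < δ → δ < ε → S δ = {z₀}) :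
    {z | ∃ δ₀ > (0 : ℝ), ∀ δ : ℝ, 0 < δ → δ < δ₀ → z ∈ S δ} = {z₀} := by
  ext z
  constructor
  · rintro ⟨δ₀, hδ₀, hz⟩
    have hδ : 0 < min δ₀ ε / 2 := by positivity
    have hz' := hz _ hδ (by linarith [min_le_left δ₀ ε])
    rwa [h _ hδ (by linarith [min_le_right δ₀ ε])] at hz'
  · rintro rfl
    exact ⟨ε, hε, fun δ hδ hδε => by rw [h δ hδ hδε]; rfl⟩

namespace PreComplex

variable {C C₁ C₂ : PreComplex}

lemma bdry_zero : C.bdry 0 = 0 := by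
  funext y; simp [bdry]

lemma bdry_add (c c' : C.Chain) : C.bdry (c + c') = C.bdry c + C.bdry c' := by
  funext y; simp [bdry, add_mul, sum_add_distrib]

lemma GenCycle.ne_zero {z : C.Chain} (hz : C.GenCycle z) : z ≠ 0 := by
  rintro rfl
  exact hz.2.2 ⟨0, bdry_zero⟩

def IsCocycle (φ : C.Chain) : Prop := ∀ x, ∑ y, C.d x y * φ y = 0

lemma not_isBoundary_of_isCocycle {φ : C.Chain} (hφ : C.IsCocycle φ) {z : C.Chain}
    (hz : ∑ x, z x * φ x ≠ 0) : ¬ C.isBoundary z := by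
  rintro ⟨w, rfl⟩
  apply hz
  simp only [bdry, sum_mul, mul_assoc]
  rw [sum_comm]
  simp [← mul_sum, hφ _]

lemma gamma2Set_eq_of_singleton {t s : ℝ} {zm zp : C.Chain} (hm : C.Zminus t = {zm})
    (hp : C.Zplus t = {zp}) : C.gamma2Set t s = {r | C.sameClass t s r zm zp} := by
  ext r
  simp [gamma2Set, hm, hp]

lemma Upsilon2_eq_of_gamma2Set_eq_Ici {t s r₀ : ℝ} (h : C.gamma2Set t s = Set.Ici r₀) :
    C.Upsilon2 t s = ((-2 * (r₀ - C.gamma t) : ℝ) : EReal) := by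
  have hleast : IsLeast ((fun r : ℝ => (r : EReal)) '' Set.Ici r₀) r₀ :=
    ⟨⟨r₀, Set.self_mem_Ici, rfl⟩, by rintro _ ⟨r, hr, rfl⟩; exact EReal.coe_le_coe_iff.mpr hr⟩
  rw [Upsilon2, gamma2, h, hleast.csInf_eq, EReal.coe_mul, EReal.coe_sub]
  rfl

lemma sum_tensor {M : Type*} [AddCommMonoid M] (F : (C₁.tensor C₂).B → M) :
    ∑ p, F p = ∑ x : C₁.B, ∑ y : C₂.B, F (x, y) :=
  Fintype.sum_prod_type F

def tmul (f : C₁.Chain) (g : C₂.Chain) : (C₁.tensor C₂).Chain :=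
  fun p => f p.1 * g p.2

lemma tmul_apply (f : C₁.Chain) (g : C₂.Chain) (x : C₁.B) (y : C₂.B) :
    tmul f g (x, y) = f x * g y := rfl

lemma tmul_zero_left (g : C₂.Chain) : tmul (0 : C₁.Chain) g = 0 := by
  funext p; simp [tmul]

lemma tmul_zero_right (f : C₁.Chain) : tmul f (0 : C₂.Chain) = 0 := by
  funext p; simp [tmul]

lemma tmul_add_left (f f' : C₁.Chain) (g : C₂.Chain) :
    tmul (f + f') g = tmul f g + tmul f' g := by
  funext p; simp [tmul, add_mul]

lemma tensor_bdry_apply (w : (C₁.tensor C₂).Chain) (x : C₁.B) (y : C₂.B) :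
    (C₁.tensor C₂).bdry w (x, y) =
      C₁.bdry (fun x' => w (x', y)) x + C₂.bdry (fun y' => w (x, y')) y := by
  simp only [bdry, sum_tensor]
  simp [tensor, mul_add, sum_add_distrib, mul_ite]

lemma bdry_tmul (f : C₁.Chain) (g : C₂.Chain) :
    (C₁.tensor C₂).bdry (tmul f g) = tmul (C₁.bdry f) g + tmul f (C₂.bdry g) := by
  funext ⟨x, y⟩
  rw [tensor_bdry_apply]
  show _ = C₁.bdry f x * g y + f x * C₂.bdry g y
  simp only [tmul, bdry, sum_mul, mul_sum]
  congr 1 <;> exact sum_congr rfl fun _ _ => by ring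

lemma IsCocycle.tmul {φ₁ : C₁.Chain} {φ₂ : C₂.Chain} (h₁ : C₁.IsCocycle φ₁)
    (h₂ : C₂.IsCocycle φ₂) : (C₁.tensor C₂).IsCocycle (tmul φ₁ φ₂) := by
  rintro ⟨x, y⟩
  calc ∑ q, (C₁.tensor C₂).d (x, y) q * PreComplex.tmul φ₁ φ₂ q
      = (∑ x', C₁.d x x' * φ₁ x') * φ₂ y + φ₁ x * ∑ y', C₂.d y y' * φ₂ y' := by
        simp only [sum_tensor]
        simp only [tensor, PreComplex.tmul, add_mul, ite_mul, zero_mul, sum_add_distrib,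
          sum_ite_eq, mem_univ, if_true, sum_ite_irrel, sum_const_zero, sum_mul, mul_sum]
        congr 1 <;> exact sum_congr rfl fun _ _ => by ring
    _ = 0 := by rw [h₁ x, h₂ y]; ring

lemma sum_tmul_mul_tmul (f φ₁ : C₁.Chain) (g φ₂ : C₂.Chain) :
    ∑ p, tmul f g p * tmul φ₁ φ₂ p = (∑ x, f x * φ₁ x) * ∑ y, g y * φ₂ y := by
  simp only [sum_tensor, tmul, sum_mul_sum, mul_mul_mul_comm]

end PreComplex

namespace Sc

variable {n : ℕ}

/-- A bare `Sum.inl k` has type `Fin (n + 1) ⊕ Fin n` rather than `(Sc n).B`, which defeats `rw`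
and `simp` with lemmas about chains; hence these named basis elements (and `Tc.a`, `Tc.b`). -/
def A (k : Fin (n + 1)) : (Sc n).B := .inl k

def B (j : Fin n) : (Sc n).B := .inr j

@[simp]
lemma A_inj {k k' : Fin (n + 1)} : A k = A k' ↔ k = k' := Sum.inl_injective.eq_iff

@[simp]
lemma B_ne_A (j : Fin n) (k : Fin (n + 1)) : B j ≠ A k := Sum.inr_ne_inl

@[elab_as_elim]
lemma basis_cases {motive : (Sc n).B → Prop} (hA : ∀ k, motive (A k)) (hB : ∀ j, motive (B j))
    (x : (Sc n).B) : motive x := by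
  cases x
  exacts [hA _, hB _]

lemma sum_basis {M : Type*} [AddCommMonoid M] (F : (Sc n).B → M) :
    ∑ x, F x = ∑ k, F (A k) + ∑ j, F (B j) :=
  Fintype.sum_sum_type F

lemma d_A (k : Fin (n + 1)) (x : (Sc n).B) : (Sc n).d (A k) x = 0 := by
  cases x <;> rfl

lemma d_B_A (j : Fin n) (k : Fin (n + 1)) :
    (Sc n).d (B j) (A k) = if (k : ℕ) = j ∨ (k : ℕ) = j + 1 then 1 else 0 := rfl

lemma d_B_B (j j' : Fin n) : (Sc n).d (B j) (B j') = 0 := rfl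

lemma bdry_B (f : (Sc n).Chain) (j : Fin n) : (Sc n).bdry f (B j) = 0 := by
  simp [PreComplex.bdry, sum_basis, d_A, d_B_B]

lemma bdry_A (f : (Sc n).Chain) (k : Fin (n + 1)) :
    (Sc n).bdry f (A k) =
      (if h : (k : ℕ) < n then f (B ⟨k, h⟩) else 0) +
        if h : 0 < (k : ℕ) then f (B ⟨k - 1, by omega⟩) else 0 := by
  have hsplit : ∀ j : Fin n, f (B j) * (Sc n).d (B j) (A k) =
      (if (j : ℕ) = k then f (B j) else 0) +
        if 0 < (k : ℕ) then (if (j : ℕ) = k - 1 then f (B j) else 0) else 0 := by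
    intro j
    rw [d_B_A]
    split_ifs <;> first | omega | simp
  simp only [PreComplex.bdry, sum_basis, d_A, mul_zero, sum_const_zero, zero_add, hsplit,
    sum_add_distrib, Fin.sum_ite_val_eq]
  by_cases hk : 0 < (k : ℕ)
  · simp [hk, Fin.sum_ite_val_eq, show (k : ℕ) - 1 < n by omega]
  · simp [hk]

lemma bdry_eq_zero {f : (Sc n).Chain} (hf : ∀ j, f (B j) = 0) : (Sc n).bdry f = 0 := by
  funext x
  induction x using basis_cases with
  | hA k => simp [bdry_A, hf]
  | hB j => exact bdry_B f j

def sumA (n : ℕ) : (Sc n).Chain := Sum.elim 1 0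

def sumB (n : ℕ) : (Sc n).Chain := Sum.elim 0 1

@[simp] lemma sumA_A (k : Fin (n + 1)) : sumA n (A k) = 1 := rfl
@[simp] lemma sumA_B (j : Fin n) : sumA n (B j) = 0 := rfl
@[simp] lemma sumB_A (k : Fin (n + 1)) : sumB n (A k) = 0 := rfl
@[simp] lemma sumB_B (j : Fin n) : sumB n (B j) = 1 := rfl

lemma isCocycle_sumA : (Sc n).IsCocycle (sumA n) := by
  intro x
  induction x using basis_cases with
  | hA k => simp [d_A]
  | hB j =>
    rw [sum_basis, Fintype.sum_eq_add j.castSucc j.succ (by simp [Fin.ext_iff])]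
    · simp only [d_B_A, d_B_B, Fin.val_castSucc, Fin.val_succ, true_or, or_true, if_true,
        sumA_A, sumA_B, mul_one, mul_zero, sum_const_zero, add_zero]
      exact CharTwo.add_self_eq_zero 1
    · intro k hk
      simp only [ne_eq, Fin.ext_iff, Fin.val_castSucc, Fin.val_succ] at hk
      rw [d_B_A, sumA_A, mul_one, if_neg (by omega)]

lemma eq_zero_of_bdry_eq_zero {f : (Sc n).Chain} (hf : ∀ k, (Sc n).bdry f (A k) = 0)
    (j : Fin n) : f (B j) = 0 := by
  obtain ⟨v, hv⟩ := j
  induction v with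
  | zero => simpa [bdry_A, hv] using hf 0
  | succ v ih => simpa [bdry_A, hv, ih (by omega)] using hf ⟨v + 1, by omega⟩

lemma bdry_sumB :
    (Sc n).bdry (sumB n) = Pi.single (A 0) 1 + Pi.single (A (Fin.last n)) 1 := by
  funext x
  induction x using basis_cases with
  | hA k =>
    rw [Pi.add_apply, bdry_A, Pi.single_apply, Pi.single_apply]
    simp only [A_inj, sumB_B, Fin.ext_iff, Fin.val_zero, Fin.val_last]
    have := k.isLt
    split_ifs <;> first | omega | decide
  | hB j => simp [bdry_B]

lemma eq_of_bdry_eq {f g : (Sc n).Chain} (h : (Sc n).bdry f = (Sc n).bdry g) (j : Fin n) :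
    f (B j) = g (B j) := by
  have hfg : ∀ k, (Sc n).bdry (f + g) (A k) = 0 := fun k => by
    rw [PreComplex.bdry_add, h, Pi.add_apply, CharTwo.add_self_eq_zero]
  exact CharTwo.add_eq_zero.mp (eq_zero_of_bdry_eq_zero hfg j)

end Sc

namespace Tc

variable {n : ℕ}

def a (i : Fin (2 * n + 1)) : (Tc n).B := .inl i

def b (m : Fin (2 * n)) : (Tc n).B := .inr m

@[elab_as_elim]
lemma basis_cases {motive : (Tc n).B → Prop} (ha : ∀ i, motive (a i)) (hb : ∀ m, motive (b m))
    (y : (Tc n).B) : motive y := by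
  cases y
  exacts [ha _, hb _]

lemma sum_basis {M : Type*} [AddCommMonoid M] (F : (Tc n).B → M) :
    ∑ y, F y = ∑ i, F (a i) + ∑ m, F (b m) :=
  Fintype.sum_sum_type F

lemma d_a_a (i i' : Fin (2 * n + 1)) : (Tc n).d (a i) (a i') = 0 := rfl

lemma d_a_b (i : Fin (2 * n + 1)) (m : Fin (2 * n)) :
    (Tc n).d (a i) (b m) = if (m : ℕ) + 1 = i ∨ (m : ℕ) = i then 1 else 0 := rfl

lemma d_b (m : Fin (2 * n)) (y : (Tc n).B) : (Tc n).d (b m) y = 0 := by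
  cases y <;> rfl

lemma bdry_a (g : (Tc n).Chain) (i : Fin (2 * n + 1)) : (Tc n).bdry g (a i) = 0 := by
  simp [PreComplex.bdry, sum_basis, d_a_a, d_b]

lemma bdry_b (g : (Tc n).Chain) (m : Fin (2 * n)) :
    (Tc n).bdry g (b m) = g (a m.castSucc) + g (a m.succ) := by
  rw [PreComplex.bdry, sum_basis, Fintype.sum_eq_add m.castSucc m.succ (by simp [Fin.ext_iff])]
  · simp [d_a_b, d_b]
  · intro i hi
    simp only [ne_eq, Fin.ext_iff, Fin.val_castSucc, Fin.val_succ] at hi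
    rw [d_a_b, if_neg (by omega), mul_zero]

def sumA (n : ℕ) : (Tc n).Chain := Sum.elim 1 0

@[simp] lemma sumA_a (i : Fin (2 * n + 1)) : sumA n (a i) = 1 := rfl
@[simp] lemma sumA_b (m : Fin (2 * n)) : sumA n (b m) = 0 := rfl

lemma bdry_sumA : (Tc n).bdry (sumA n) = 0 := by
  funext y
  induction y using basis_cases with
  | ha i => exact bdry_a _ i
  | hb m => simp [bdry_b, CharTwo.add_self_eq_zero]

lemma isCocycle_single_a (i : Fin (2 * n + 1)) : (Tc n).IsCocycle (Pi.single (a i) 1) := by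
  intro y
  rw [Fintype.sum_eq_single (a i) fun y' hy' => by rw [Pi.single_eq_of_ne hy', mul_zero],
    Pi.single_eq_same, mul_one]
  induction y using basis_cases with
  | ha i' => exact d_a_a i' i
  | hb m => exact d_b m _

lemma eq_of_bdry_b_eq_zero {g : (Tc n).Chain} (hg : ∀ m, (Tc n).bdry g (b m) = 0)
    (i : Fin (2 * n + 1)) : g (a i) = g (a 0) := by
  induction i using Fin.induction with
  | zero => rfl
  | succ m ih => rw [← ih, ← CharTwo.add_eq_zero, add_comm, ← bdry_b, hg]

end Tc

open PreComplex

namespace Cprod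

variable {n : ℕ}

lemma bdry_apply (w : (Cprod n).Chain) (x : (Sc n).B) (y : (Tc n).B) :
    (Cprod n).bdry w (x, y) =
      (Sc n).bdry (fun x' => w (x', y)) x + (Tc n).bdry (fun y' => w (x, y')) y :=
  tensor_bdry_apply w x y

lemma zminusC_eq : zminusC n = tmul (Pi.single (Sc.A 0) 1) (Tc.sumA n) := by
  funext ⟨x, y⟩
  induction x using Sc.basis_cases <;> induction y using Tc.basis_cases <;>
    simp only [tmul_apply, Pi.single_apply, Sc.A_inj, Sc.B_ne_A, Tc.sumA_a, Tc.sumA_b]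
      <;> simp [zminusC, Sc.A, Sc.B, Tc.a, Tc.b, Sc]

lemma zplusC_eq : zplusC n = tmul (Pi.single (Sc.A (Fin.last n)) 1) (Tc.sumA n) := by
  funext ⟨x, y⟩
  induction x using Sc.basis_cases <;> induction y using Tc.basis_cases <;>
    simp only [tmul_apply, Pi.single_apply, Sc.A_inj, Sc.B_ne_A, Tc.sumA_a, Tc.sumA_b]
      <;> simp [zplusC, Sc.A, Sc.B, Tc.a, Tc.b, Sc]

lemma bdry_tmul_sumA (f : (Sc n).Chain) :
    (Cprod n).bdry (tmul f (Tc.sumA n)) = tmul ((Sc n).bdry f) (Tc.sumA n) := by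
  unfold Cprod
  rw [bdry_tmul, Tc.bdry_sumA, tmul_zero_right, add_zero]

lemma gr_A_b (k : Fin (n + 1)) (m : Fin (2 * n)) : (Cprod n).gr (Sc.A k, Tc.b m) = -1 := rfl

lemma gr_B_a (j : Fin n) (i : Fin (2 * n + 1)) : (Cprod n).gr (Sc.B j, Tc.a i) = 1 := rfl

lemma exists_eq_a_of_tmul_sumA_ne_zero {f : (Sc n).Chain} {x : (Sc n).B} {y : (Tc n).B}
    (h : tmul f (Tc.sumA n) (x, y) ≠ 0) : f x ≠ 0 ∧ ∃ i, y = Tc.a i := by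
  rw [tmul_apply, mul_ne_zero_iff] at h
  refine ⟨h.1, ?_⟩
  induction y using Tc.basis_cases with
  | ha i => exact ⟨i, rfl⟩
  | hb m => exact absurd (Tc.sumA_b m) h.2

lemma apply_a_of_eq_tmul {z : (Cprod n).Chain} {f : (Sc n).Chain}
    (h : z = tmul f (Tc.sumA n)) (x : (Sc n).B) (i : Fin (2 * n + 1)) : z (x, Tc.a i) = f x := by
  rw [h, tmul_apply, Tc.sumA_a, mul_one]

lemma genCycle_tmul_single (k : Fin (n + 1)) :
    (Cprod n).GenCycle (tmul (Pi.single (Sc.A k) 1) (Tc.sumA n)) := by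
  refine ⟨?_, ?_, ?_⟩
  · unfold PreComplex.isCycle
    rw [bdry_tmul_sumA, Sc.bdry_eq_zero (fun j => by simp), tmul_zero_left]
    rfl
  · rintro ⟨x, y⟩ hxy
    obtain ⟨hx, i, rfl⟩ := exists_eq_a_of_tmul_sumA_ne_zero hxy
    obtain rfl : x = Sc.A k := Pi.support_single_subset hx
    rfl
  · refine not_isBoundary_of_isCocycle (Sc.isCocycle_sumA.tmul (Tc.isCocycle_single_a 0)) ?_
    rw [sum_tmul_mul_tmul]
    simp [Pi.single_apply]

lemma eq_tmul_of_genCycle {z : (Cprod n).Chain} (hz : (Cprod n).GenCycle z)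
    (hBb : ∀ j m, z (Sc.B j, Tc.b m) = 0) : z = tmul (fun x => z (x, Tc.a 0)) (Tc.sumA n) := by
  have hzb : ∀ x m, z (x, Tc.b m) = 0 := by
    intro x m
    induction x using Sc.basis_cases with
    | hA k => exact by_contra fun h => absurd (hz.2.1 _ h) (by rw [gr_A_b]; norm_num)
    | hB j => exact hBb j m
  have hrow : ∀ x i, z (x, Tc.a i) = z (x, Tc.a 0) := fun x => Tc.eq_of_bdry_b_eq_zero fun m => by
    have h : (Cprod n).bdry z (x, Tc.b m) = 0 := by rw [hz.1]; rfl
    rwa [bdry_apply, show (fun x' => z (x', Tc.b m)) = 0 from funext fun x' => hzb x' m,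
      bdry_zero, Pi.zero_apply, zero_add] at h
  funext ⟨x, y⟩
  induction y using Tc.basis_cases with
  | ha i => rw [tmul_apply, Tc.sumA_a, mul_one, hrow]
  | hb m => rw [tmul_apply, Tc.sumA_b, mul_zero, hzb]

lemma lev_A_a (k : Fin (n + 1)) (i : Fin (2 * n + 1)) :
    (Cprod n).lev (Sc.A k, Tc.a i) = (2 * (k : ℤ) + i - 2 * n, 2 * (n : ℤ) - 2 * k - i) := by
  show (2 * (k : ℤ) + ((i : ℤ) - 2 * n), 2 * n - 2 * (k : ℤ) + -(i : ℤ)) = _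
  ext <;> simp only <;> ring

lemma lev_B_a (j : Fin n) (i : Fin (2 * n + 1)) :
    (Cprod n).lev (Sc.B j, Tc.a i) = (2 * (j : ℤ) + 2 + i - 2 * n, 2 * (n : ℤ) - 2 * j - i) := by
  show (2 * (j : ℤ) + 2 + ((i : ℤ) - 2 * n), 2 * n - 2 * (j : ℤ) + -(i : ℤ)) = _
  ext <;> simp only <;> ring

lemma lev_B_b (j : Fin n) (m : Fin (2 * n)) :
    (Cprod n).lev (Sc.B j, Tc.b m) =
      (2 * (j : ℤ) + 2 + m - 2 * n, 2 * (n : ℤ) - 2 * j - m - 1) := by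
  show (2 * (j : ℤ) + 2 + ((m : ℤ) - 2 * n), 2 * n - 2 * (j : ℤ) + (-(m : ℤ) - 1)) = _
  ext <;> simp only <;> ring

lemma fval_A_a (u : ℝ) (k : Fin (n + 1)) (i : Fin (2 * n + 1)) :
    fval u ((Cprod n).lev (Sc.A k, Tc.a i)) = (1 - u) * (2 * k + i - 2 * n) := by
  rw [lev_A_a, fval]; push_cast; ring

lemma fval_B_a (u : ℝ) (j : Fin n) (i : Fin (2 * n + 1)) :
    fval u ((Cprod n).lev (Sc.B j, Tc.a i)) =
      (1 - u) * (2 * j + i) + (2 * n - 1) * u + 2 - 2 * n := by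
  rw [lev_B_a, fval]; push_cast; ring

lemma fval_B_b (u : ℝ) (j : Fin n) (m : Fin (2 * n)) :
    fval u ((Cprod n).lev (Sc.B j, Tc.b m)) = 1 / 2 + (1 - u) * (2 * j + m + 3 / 2 - 2 * n) := by
  rw [lev_B_b, fval]; push_cast; ring

lemma fval_B_b_pos {u : ℝ} (hu : 4 * n * |u - 1| < 1) (j : Fin n) (m : Fin (2 * n)) :
    0 < fval u ((Cprod n).lev (Sc.B j, Tc.b m)) := by
  have hj : (j : ℝ) + 1 ≤ n := by exact_mod_cast j.isLt
  have hm : (m : ℝ) + 1 ≤ 2 * n := by exact_mod_cast m.isLt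
  have hX : |2 * (j : ℝ) + m + 3 / 2 - 2 * n| ≤ 2 * n :=
    abs_le.mpr ⟨by linarith [Nat.cast_nonneg (α := ℝ) j, Nat.cast_nonneg (α := ℝ) m], by linarith⟩
  have hprod : |(1 - u) * (2 * (j : ℝ) + m + 3 / 2 - 2 * n)| < 1 / 2 := by
    rw [abs_mul, abs_sub_comm]
    nlinarith [mul_le_mul_of_nonneg_left hX (abs_nonneg (u - 1))]
  rw [fval_B_b]
  linarith [neg_abs_le ((1 - u) * (2 * (j : ℝ) + m + 3 / 2 - 2 * n))]

lemma inF_tmul_single {u s : ℝ} {k : Fin (n + 1)}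
    (h : ∀ i, fval u ((Cprod n).lev (Sc.A k, Tc.a i)) ≤ s) :
    (Cprod n).inF u s (tmul (Pi.single (Sc.A k) 1) (Tc.sumA n)) := by
  rintro ⟨x, y⟩ hxy
  obtain ⟨hx, i, rfl⟩ := exists_eq_a_of_tmul_sumA_ne_zero hxy
  obtain rfl : x = Sc.A k := Pi.support_single_subset hx
  exact h i

lemma genCycle_zminusC : (Cprod n).GenCycle (zminusC n) :=
  zminusC_eq ▸ genCycle_tmul_single 0

lemma genCycle_zplusC : (Cprod n).GenCycle (zplusC n) :=
  zplusC_eq ▸ genCycle_tmul_single (Fin.last n)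

lemma inF_zminusC {u : ℝ} (hu : u ≤ 1) : (Cprod n).inF u 0 (zminusC n) := by
  rw [zminusC_eq]
  refine inF_tmul_single fun i => ?_
  have hi : (i : ℝ) ≤ 2 * n := by exact_mod_cast Nat.lt_succ_iff.mp i.isLt
  rw [fval_A_a, Fin.val_zero]
  push_cast
  nlinarith

lemma inF_zplusC {u : ℝ} (hu : 1 ≤ u) : (Cprod n).inF u 0 (zplusC n) := by
  rw [zplusC_eq]
  refine inF_tmul_single fun i => ?_
  rw [fval_A_a, Fin.val_last]
  nlinarith [Nat.cast_nonneg (α := ℝ) i]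

lemma eq_tmul_of_inF {u s : ℝ} (hu : 4 * n * |u - 1| < 1) (hs : s ≤ 0) {z : (Cprod n).Chain}
    (hz : (Cprod n).GenCycle z) (hzF : (Cprod n).inF u s z) :
    z = tmul (fun x => z (x, Tc.a 0)) (Tc.sumA n) :=
  eq_tmul_of_genCycle hz fun j m =>
    by_contra fun h => (hzF _ h).not_gt (hs.trans_lt (fval_B_b_pos hu j m))

lemma apply_B_a_eq_zero {z : (Cprod n).Chain} (hz : (Cprod n).isGraded z 0) (j : Fin n)
    (i : Fin (2 * n + 1)) : z (Sc.B j, Tc.a i) = 0 :=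
  by_contra fun h => absurd (hz _ h) (by rw [gr_B_a]; norm_num)

lemma gamma_eq_zero {u : ℝ} (hu : 4 * n * |u - 1| < 1) : (Cprod n).gamma u = 0 := by
  refine IsLeast.csInf_eq ⟨?_, fun s ⟨z, hz, hzF⟩ => ?_⟩
  · rcases le_total u 1 with h | h
    · exact ⟨zminusC n, genCycle_zminusC, inF_zminusC h⟩
    · exact ⟨zplusC n, genCycle_zplusC, inF_zplusC h⟩
  by_contra! hs
  have hzt := eq_tmul_of_inF hu hs.le hz hzF
  obtain ⟨x, hx⟩ : ∃ x, z (x, Tc.a 0) ≠ 0 := by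
    by_contra! h
    rw [show (fun x => z (x, Tc.a 0)) = 0 from funext h, tmul_zero_left] at hzt
    exact hz.ne_zero hzt
  induction x using Sc.basis_cases with
  | hB j => exact hx (apply_B_a_eq_zero hz.2.1 j 0)
  | hA k =>
    have hrow : ∀ i, fval u ((Cprod n).lev (Sc.A k, Tc.a i)) < 0 := fun i =>
      (hzF _ (by rwa [apply_a_of_eq_tmul hzt])).trans_lt hs
    have hk : (k : ℝ) ≤ n := by exact_mod_cast Nat.lt_succ_iff.mp k.isLt
    rcases le_total u 1 with h | h
    · have := hrow (Fin.last _)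
      rw [fval_A_a, Fin.val_last] at this
      push_cast at this
      nlinarith [Nat.cast_nonneg (α := ℝ) k]
    · have := hrow 0
      rw [fval_A_a, Fin.val_zero] at this
      push_cast at this
      nlinarith

lemma eq_tmul_single_of_inF {u : ℝ} (hu : 4 * n * |u - 1| < 1) {z : (Cprod n).Chain}
    (hz : (Cprod n).GenCycle z) (hzF : (Cprod n).inF u 0 z) (k₀ : Fin (n + 1))
    (hk₀ : ∀ k ≠ k₀, ∃ i, 0 < fval u ((Cprod n).lev (Sc.A k, Tc.a i))) :
    z = tmul (Pi.single (Sc.A k₀) 1) (Tc.sumA n) := by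
  have hzt := eq_tmul_of_inF hu le_rfl hz hzF
  have hrow : (fun x => z (x, Tc.a 0)) = Pi.single (Sc.A k₀) (z (Sc.A k₀, Tc.a 0)) := by
    funext x
    induction x using Sc.basis_cases with
    | hB j => simp [apply_B_a_eq_zero hz.2.1]
    | hA k =>
      by_cases hk : k = k₀
      · subst hk; simp
      · obtain ⟨i, hi⟩ := hk₀ k hk
        rw [Pi.single_eq_of_ne (by simpa using hk)]
        by_contra h
        exact (hzF _ (by rwa [apply_a_of_eq_tmul hzt])).not_gt hi
  have hne : z (Sc.A k₀, Tc.a 0) ≠ 0 := fun h => hz.ne_zero <| by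
    rw [hzt, hrow, h, Pi.single_zero, tmul_zero_left]
    rfl
  have hone : z (Sc.A k₀, Tc.a 0) = 1 := Fin.eq_one_of_ne_zero _ hne
  rw [hzt, hrow, hone]

lemma genCycle_inF_zero_iff_of_lt_one {u : ℝ} (hu : 4 * n * |u - 1| < 1) (h1 : u < 1)
    (z : (Cprod n).Chain) : (Cprod n).GenCycle z ∧ (Cprod n).inF u 0 z ↔ z = zminusC n := by
  refine ⟨fun ⟨hz, hzF⟩ => (eq_tmul_single_of_inF hu hz hzF 0 fun k hk => ⟨Fin.last _, ?_⟩).trans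
    zminusC_eq.symm, by rintro rfl; exact ⟨genCycle_zminusC, inF_zminusC h1.le⟩⟩
  have hk : (1 : ℝ) ≤ k := by exact_mod_cast Nat.one_le_iff_ne_zero.mpr (Fin.val_ne_of_ne hk)
  rw [fval_A_a, Fin.val_last]
  push_cast
  nlinarith

lemma genCycle_inF_zero_iff_of_one_lt {u : ℝ} (hu : 4 * n * |u - 1| < 1) (h1 : 1 < u)
    (z : (Cprod n).Chain) : (Cprod n).GenCycle z ∧ (Cprod n).inF u 0 z ↔ z = zplusC n := by
  refine ⟨fun ⟨hz, hzF⟩ => (eq_tmul_single_of_inF hu hz hzF (Fin.last n) fun k hk =>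
    ⟨0, ?_⟩).trans zplusC_eq.symm, by rintro rfl; exact ⟨genCycle_zplusC, inF_zplusC h1.le⟩⟩
  have hk : (k : ℝ) + 1 ≤ n := by exact_mod_cast Fin.val_lt_last hk
  rw [fval_A_a, Fin.val_zero]
  push_cast
  nlinarith

lemma four_mul_abs_lt_one {δ : ℝ} (hδ : 0 < δ) (hδε : δ < 1 / (4 * n + 1)) (u : ℝ)
    (hu : |u - 1| = δ) : 4 * n * |u - 1| < 1 := by
  rw [lt_div_iff₀ (by positivity)] at hδε
  rw [hu]
  nlinarith

lemma Zminus_one : (Cprod n).Zminus 1 = {zminusC n} := by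
  refine setOf_eventually_mem_eq_singleton (ε := 1 / (4 * n + 1)) (by positivity)
    fun δ hδ hδε => ?_
  have hu := four_mul_abs_lt_one hδ hδε (1 - δ)
    (by rw [sub_sub_cancel_left, abs_neg, abs_of_pos hδ])
  ext z
  simp only [ZminusAt, gamma_eq_zero hu, Set.mem_singleton_iff]
  exact genCycle_inF_zero_iff_of_lt_one hu (by linarith) z

lemma Zplus_one : (Cprod n).Zplus 1 = {zplusC n} := by
  refine setOf_eventually_mem_eq_singleton (ε := 1 / (4 * n + 1)) (by positivity)
    fun δ hδ hδε => ?_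
  have hu := four_mul_abs_lt_one hδ hδε (1 + δ) (by rw [add_sub_cancel_left, abs_of_pos hδ])
  ext z
  simp only [ZplusAt, gamma_eq_zero hu, Set.mem_singleton_iff]
  exact genCycle_inF_zero_iff_of_one_lt hu (by linarith) z

lemma bdry_tmul_sumB : (Cprod n).bdry (tmul (Sc.sumB n) (Tc.sumA n)) = zminusC n + zplusC n := by
  rw [bdry_tmul_sumA, Sc.bdry_sumB, tmul_add_left, zminusC_eq, zplusC_eq]
  rfl

lemma apply_B_a_eq_one {w : (Cprod n).Chain} (hw : (Cprod n).bdry w = zminusC n + zplusC n)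
    (j : Fin n) (i : Fin (2 * n + 1)) : w (Sc.B j, Tc.a i) = 1 := by
  have h : (Sc n).bdry (fun x => w (x, Tc.a i)) = (Sc n).bdry (Sc.sumB n) := by
    funext x
    have hx := congrFun (hw.trans bdry_tmul_sumB.symm) (x, Tc.a i)
    rwa [bdry_apply, Tc.bdry_a, add_zero, bdry_tmul_sumA, tmul_apply, Tc.sumA_a, mul_one] at hx
  simpa using Sc.eq_of_bdry_eq h j

lemma sameClass_one_iff {s r : ℝ} {j₀ : Fin n} {i₀ : Fin (2 * n + 1)}
    (hmax : ∀ j i, fval s ((Cprod n).lev (Sc.B j, Tc.a i)) ≤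
      fval s ((Cprod n).lev (Sc.B j₀, Tc.a i₀))) :
    (Cprod n).sameClass 1 s r (zminusC n) (zplusC n) ↔
      fval s ((Cprod n).lev (Sc.B j₀, Tc.a i₀)) ≤ r := by
  have hγ : (Cprod n).gamma 1 = 0 := gamma_eq_zero (by simp)
  have hrow_mem : ∀ k, ∀ x, tmul (Pi.single (Sc.A k) 1) (Tc.sumA n) x ≠ 0 →
      (Cprod n).inRegion 1 s r x := by
    rintro k ⟨x, y⟩ hxy
    obtain ⟨hx, i, rfl⟩ := exists_eq_a_of_tmul_sumA_ne_zero hxy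
    obtain rfl : x = Sc.A k := Pi.support_single_subset hx
    left
    rw [fval_A_a, hγ, sub_self, zero_mul]
  constructor
  · rintro ⟨-, -, w, hwR, hw⟩
    refine (hwR _ (by rw [apply_B_a_eq_one hw]; exact one_ne_zero)).resolve_left fun h => ?_
    rw [fval_B_a, hγ] at h
    linarith
  · intro hr
    refine ⟨zminusC_eq ▸ hrow_mem 0, zplusC_eq ▸ hrow_mem (Fin.last n), tmul (Sc.sumB n) (Tc.sumA n),
      ?_, bdry_tmul_sumB⟩
    rintro ⟨x, y⟩ hxy
    obtain ⟨hx, i, rfl⟩ := exists_eq_a_of_tmul_sumA_ne_zero hxy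
    induction x using Sc.basis_cases with
    | hA k => exact absurd (Sc.sumB_A k) hx
    | hB j => exact Or.inr ((hmax j i).trans hr)

lemma Upsilon2_one {s : ℝ} {j₀ : Fin n} {i₀ : Fin (2 * n + 1)}
    (hmax : ∀ j i, fval s ((Cprod n).lev (Sc.B j, Tc.a i)) ≤
      fval s ((Cprod n).lev (Sc.B j₀, Tc.a i₀))) :
    (Cprod n).Upsilon2 1 s = ((-2 * fval s ((Cprod n).lev (Sc.B j₀, Tc.a i₀)) : ℝ) : EReal) := by
  have hset : (Cprod n).gamma2Set 1 s = Set.Ici (fval s ((Cprod n).lev (Sc.B j₀, Tc.a i₀))) := by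
    rw [gamma2Set_eq_of_singleton Zminus_one Zplus_one]
    ext r
    exact sameClass_one_iff hmax
  rw [Upsilon2_eq_of_gamma2Set_eq_Ici hset, gamma_eq_zero (by simp), sub_zero]

lemma fval_B_a_le_of_le_one (hn : 1 ≤ n) {s : ℝ} (hs : s ≤ 1) (j : Fin n) (i : Fin (2 * n + 1)) :
    fval s ((Cprod n).lev (Sc.B j, Tc.a i)) ≤
      fval s ((Cprod n).lev (Sc.B ⟨n - 1, Nat.sub_lt hn Nat.one_pos⟩, Tc.a (Fin.last _))) := by
  have hj : (j : ℝ) + 1 ≤ n := by exact_mod_cast j.isLt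
  have hi : (i : ℝ) ≤ 2 * n := by exact_mod_cast Nat.lt_succ_iff.mp i.isLt
  rw [fval_B_a, fval_B_a, Fin.val_last, Fin.val_mk, Nat.cast_sub hn]
  push_cast
  nlinarith

lemma fval_B_a_le_of_one_le (hn : 1 ≤ n) {s : ℝ} (hs : 1 ≤ s) (j : Fin n) (i : Fin (2 * n + 1)) :
    fval s ((Cprod n).lev (Sc.B j, Tc.a i)) ≤ fval s ((Cprod n).lev (Sc.B ⟨0, hn⟩, Tc.a 0)) := by
  rw [fval_B_a, fval_B_a, Fin.val_zero, Fin.val_mk]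
  push_cast
  nlinarith [Nat.cast_nonneg (α := ℝ) j, Nat.cast_nonneg (α := ℝ) i]

end Cprod

/-- for `C(n) = S_n ⊗ T_n`: `γ_{C(n)}(1) = 0`; `Z⁻` and `Z⁺` at
`t = 1` are the singletons `{z⁻}` and `{z⁺}`; every chain `w` with
`∂w = z⁻ + z⁺` contains `a₁ ⊗ B₁` (at level `(−2n+2, 2n)`) and
`a_{2n+1} ⊗ B_n` (at level `(2n, −2n+2)`); and `Υ²_{C(n),1}(s) = (4n−2)s − 4n`
on `[0,1]` and `= (−4n+2)s + 4n − 4` on `[1,2]`. -/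
theorem upsilon2_Cprod (n : ℕ) (hn : 1 ≤ n) :
    (Cprod n).gamma 1 = 0 ∧
    (Cprod n).Zminus 1 = {zminusC n} ∧
    (Cprod n).Zplus 1 = {zplusC n} ∧
    (Cprod n).lev (Sum.inr (⟨0, by omega⟩ : Fin n),
        Sum.inl (⟨0, by omega⟩ : Fin (2 * n + 1))) = (-2 * (n : ℤ) + 2, 2 * (n : ℤ)) ∧
    (Cprod n).lev (Sum.inr (⟨n - 1, by omega⟩ : Fin n),
        Sum.inl (⟨2 * n, by omega⟩ : Fin (2 * n + 1))) = (2 * (n : ℤ), -2 * (n : ℤ) + 2) ∧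
    (∀ w : (Cprod n).Chain, (Cprod n).bdry w = zminusC n + zplusC n →
        w (Sum.inr (⟨0, by omega⟩ : Fin n),
            Sum.inl (⟨0, by omega⟩ : Fin (2 * n + 1))) ≠ 0 ∧
        w (Sum.inr (⟨n - 1, by omega⟩ : Fin n),
            Sum.inl (⟨2 * n, by omega⟩ : Fin (2 * n + 1))) ≠ 0) ∧
    (∀ s ∈ Set.Icc (0 : ℝ) 1,
        (Cprod n).Upsilon2 1 s = (((4 * (n : ℝ) - 2) * s - 4 * (n : ℝ) : ℝ) : EReal)) ∧
    (∀ s ∈ Set.Icc (1 : ℝ) 2,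
        (Cprod n).Upsilon2 1 s
          = (((-4 * (n : ℝ) + 2) * s + 4 * (n : ℝ) - 4 : ℝ) : EReal)) := by
  refine ⟨Cprod.gamma_eq_zero (by simp), Cprod.Zminus_one, Cprod.Zplus_one, ?_, ?_,
    fun w hw => ⟨?_, ?_⟩, fun s hs => ?_, fun s hs => ?_⟩
  · refine (Cprod.lev_B_a ⟨0, by omega⟩ ⟨0, by omega⟩).trans ?_
    ext <;> push_cast <;> ring
  · refine (Cprod.lev_B_a ⟨n - 1, by omega⟩ ⟨2 * n, by omega⟩).trans ?_
    ext <;> push_cast [Nat.cast_sub hn] <;> ring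
  · exact ne_of_eq_of_ne (Cprod.apply_B_a_eq_one hw _ _) one_ne_zero
  · exact ne_of_eq_of_ne (Cprod.apply_B_a_eq_one hw _ _) one_ne_zero
  · rw [Cprod.Upsilon2_one (Cprod.fval_B_a_le_of_le_one hn hs.2), Cprod.fval_B_a, Fin.val_last,
      Fin.val_mk, Nat.cast_sub hn]
    congr 1
    push_cast
    ring
  · rw [Cprod.Upsilon2_one (Cprod.fval_B_a_le_of_one_le hn hs.1), Cprod.fval_B_a, Fin.val_zero,
      Fin.val_mk]
    congr 1
    push_cast
    ring
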